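/- arXiv:2010.10994 — 2 statements merged into one kernel-verified Lean document; each statement's English description precedes it below -/
import Mathlib

section
/- Define the empirical generalization error ĝen(w, s̃, u) = (1/N) Σ_{i=1}^N ( ℓ(w, z̃_{i+(1−u_i)N}) − ℓ(w, z̃_{i+u_i N}) ). Assume that E_{P_W × P_Z}[|ℓ(W, Z)|] < ∞ and that E[|ℓ(W, Z̃_k)|] < ∞ for every k ∈ {1,…,2N}, where P_W is the marginal law of W. Then E_{P_{W,S̃,U}}[ ĝen(W, S̃, U) ] = E_{P_{W,S}}[ gen(W, S) ]. -/
/-!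
Conditionally on `U = u`, the dataset `S` and the held-out half `S̄` (the samples
`z̃_{i + (1 - u_i) N}`) are two disjoint blocks of the i.i.d. super-sample, so `(S, S̄)` has law
`P_Z^N ⊗ P_Z^N` whatever `u` is. Since `W` is drawn from a kernel applied to `S` alone, `W` is then
independent of each held-out sample `Z̄_i ∼ P_Z`, so `E ℓ(W, Z̄_i) = E_{P_W ⊗ P_Z} ℓ`, which is the
population-risk term of `E gen(W, S)`; the training terms are literally the same on both sides.
-/

open MeasureTheory ProbabilityTheory ENNReal Classical

/-- The index `i + u·N` in the super-sample: `Z_i = Z̃_{i + U_i N}`. -/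
def subIdx (N : ℕ) (i : Fin N) (u : Bool) : Fin (2 * N) :=
  ⟨i.val + if u then N else 0, by have := i.isLt; cases u <;> simp <;> omega⟩

/-- The dataset `S` selected from the super-sample `S̃` by the Bernoulli variables `U`. -/
def dataset {𝒵 : Type*} (N : ℕ) (p : (Fin (2 * N) → 𝒵) × (Fin N → Bool)) : Fin N → 𝒵 :=
  fun i => p.1 (subIdx N i (p.2 i))

lemma measurable_dataset {𝒵 : Type*} [MeasurableSpace 𝒵] {N : ℕ} :
    Measurable (dataset (𝒵 := 𝒵) N) := by
  refine measurable_pi_lambda _ fun i => ?_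
  have h1 : Measurable fun q : (Fin (2 * N) → 𝒵) × Bool => q.1 (subIdx N i q.2) :=
    measurable_from_prod_countable_left fun b => measurable_pi_apply (subIdx N i b)
  have h2 : Measurable fun p : (Fin (2 * N) → 𝒵) × (Fin N → Bool) => (p.1, p.2 i) :=
    measurable_fst.prodMk ((measurable_pi_apply i).comp measurable_snd)
  exact h1.comp h2

/-- The Bernoulli(1/2) distribution on `Bool`. -/
noncomputable def bern : Measure Bool := (PMF.bernoulli (1 / 2) (by norm_num)).toMeasure

instance : IsProbabilityMeasure bern := PMF.toMeasure.isProbabilityMeasure _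

section General

variable {Ω X Y Z V : Type*} [MeasurableSpace Ω] [MeasurableSpace X] [MeasurableSpace Y]
  [MeasurableSpace Z] [MeasurableSpace V]

lemma MeasureTheory.Measure.map_prod_eq_of_forall_map_eq {ν : Measure X} [SFinite ν]
    {η : Measure Y} [IsProbabilityMeasure η] {F : X × Y → Z} (hF : Measurable F) {Q : Measure Z}
    (h : ∀ y, ν.map (fun x => F (x, y)) = Q) :
    (ν.prod η).map F = Q := by
  ext A hA
  rw [Measure.map_apply hF hA, Measure.prod_apply_symm (hF hA)]
  have hslice : ∀ y, ν ((fun x => (x, y)) ⁻¹' (F ⁻¹' A)) = Q A := fun y => by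
    rw [← h y, Measure.map_apply (f := fun x => F (x, y)) (hF.comp measurable_prodMk_right) hA]
    rfl
  simp_rw [hslice, lintegral_const, measure_univ, mul_one]

lemma MeasureTheory.Measure.map_compProd_comap_eq_prod {ν : Measure X} [SFinite ν]
    {f : X → Y} {g : X → Z} (hf : Measurable f) (hg : Measurable g)
    {Q : Measure Y} [IsFiniteMeasure Q]
    {P : Measure Z} [SigmaFinite P] (hfg : ν.map (fun x => (f x, g x)) = Q.prod P)
    (κ : Kernel Y V) [IsFiniteKernel κ] :
    (ν ⊗ₘ κ.comap f hf).map (fun p => (p.2, g p.1)) = (κ ∘ₘ Q).prod P := by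
  have hT : Measurable fun p : X × V => (p.2, g p.1) :=
    measurable_snd.prodMk (hg.comp measurable_fst)
  refine (Measure.prod_eq fun A B hA hB => ?_).symm
  have hsection : ∀ x,
      κ.comap f hf x (Prod.mk x ⁻¹' ((fun p : X × V => (p.2, g p.1)) ⁻¹' A ×ˢ B)) =
        κ (f x) A * B.indicator 1 (g x) := fun x => by
    by_cases hx : g x ∈ B <;> simp [hx, Set.preimage]
  calc ((ν ⊗ₘ κ.comap f hf).map (fun p => (p.2, g p.1))) (A ×ˢ B)
      = ∫⁻ x, κ (f x) A * B.indicator 1 (g x) ∂ν := by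
        rw [Measure.map_apply hT (hA.prod hB), Measure.compProd_apply (hT (hA.prod hB))]
        exact lintegral_congr hsection
    _ = ∫⁻ q, κ q.1 A * B.indicator 1 q.2 ∂(Q.prod P) := by
        rw [← hfg]
        exact (lintegral_map (f := fun q : Y × Z => κ q.1 A * B.indicator 1 q.2)
          (((κ.measurable_coe hA).comp measurable_fst).mul
            ((measurable_one.indicator hB).comp measurable_snd)) (hf.prodMk hg)).symm
    _ = (κ ∘ₘ Q) A * P B := by
        rw [lintegral_prod_mul (κ.measurable_coe hA).aemeasurable
          (measurable_one.indicator hB).aemeasurable, lintegral_indicator_one hB,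
          Measure.bind_apply hA κ.aemeasurable]

variable {E : Type*} [NormedAddCommGroup E] {μ : Measure Ω}

lemma integrable_apply_of_measurable_index {ι : Type*} [Fintype ι] [MeasurableSpace ι]
    [MeasurableSingletonClass ι] {b : Ω → ι} (hb : Measurable b) {f : ι → Ω → E}
    (hf : ∀ i, Integrable (f i) μ) : Integrable (fun ω => f (b ω) ω) μ := by
  have hsum : (fun ω => f (b ω) ω) = fun ω => ∑ i, (b ⁻¹' {i}).indicator (f i) ω := by
    funext ω
    simp [Set.indicator_apply]
  rw [hsum]
  exact integrable_finsetSum _ fun i _ => (hf i).indicator (hb (measurableSet_singleton i))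

lemma integrable_comp_of_map_prodMk_eq_prod {ξ : Ω → Y} {ζ : Ω → Z} (hξ : AEMeasurable ξ μ)
    (hζ : AEMeasurable ζ μ) {P : Measure Z} (hξζ : μ.map (fun ω => (ξ ω, ζ ω)) = (μ.map ξ).prod P)
    {f : Y → Z → E} (hf : Integrable (fun p : Y × Z => f p.1 p.2) ((μ.map ξ).prod P)) :
    Integrable (fun ω => f (ξ ω) (ζ ω)) μ := by
  rw [← hξζ] at hf
  exact (integrable_map_measure hf.aestronglyMeasurable (hξ.prodMk hζ)).mp hf

lemma integral_comp_of_map_prodMk_eq_prod [NormedSpace ℝ E] [IsFiniteMeasure μ] {ξ : Ω → Y}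
    {ζ : Ω → Z} (hξ : AEMeasurable ξ μ) (hζ : AEMeasurable ζ μ) {P : Measure Z} [SFinite P]
    (hξζ : μ.map (fun ω => (ξ ω, ζ ω)) = (μ.map ξ).prod P)
    {f : Y → Z → E} (hf : Integrable (fun p : Y × Z => f p.1 p.2) ((μ.map ξ).prod P)) :
    ∫ ω, f (ξ ω) (ζ ω) ∂μ = ∫ ω, ∫ z, f (ξ ω) z ∂P ∂μ := by
  rw [← integral_map (f := fun p : Y × Z => f p.1 p.2) (hξ.prodMk hζ)
      (hξζ ▸ hf.aestronglyMeasurable), hξζ, integral_prod _ hf,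
    integral_map hξ hf.aestronglyMeasurable.integral_prod_right']

lemma integrable_integral_comp [NormedSpace ℝ E] {ξ : Ω → Y} (hξ : AEMeasurable ξ μ)
    {P : Measure Z} [SFinite P]
    {f : Y → Z → E} (hf : Integrable (fun p : Y × Z => f p.1 p.2) ((μ.map ξ).prod P)) :
    Integrable (fun ω => ∫ z, f (ξ ω) z ∂P) μ :=
  (integrable_map_measure hf.aestronglyMeasurable.integral_prod_right' hξ).mp
    hf.integral_prod_left

lemma integral_mean_sub_eq_integral_sub_mean {n : ℕ} (hn : 0 < n) {a b : Fin n → Ω → ℝ}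
    {c : Ω → ℝ} (ha : ∀ i, Integrable (a i) μ) (hb : ∀ i, Integrable (b i) μ)
    (hc : Integrable c μ) (hac : ∀ i, ∫ ω, a i ω ∂μ = ∫ ω, c ω ∂μ) :
    ∫ ω, (1 / n : ℝ) * ∑ i, (a i ω - b i ω) ∂μ =
      ∫ ω, c ω - (1 / n : ℝ) * ∑ i, b i ω ∂μ := by
  rw [integral_const_mul,
    integral_finsetSum (f := fun i ω => a i ω - b i ω) _ fun i _ => (ha i).sub (hb i),
    integral_sub hc ((integrable_finsetSum _ fun i _ => hb i).const_mul _), integral_const_mul,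
    integral_finsetSum (f := fun i ω => b i ω) _ fun i _ => hb i]
  simp_rw [integral_sub (ha _) (hb _), hac, Finset.sum_sub_distrib, Finset.sum_const,
    Finset.card_univ, Fintype.card_fin, nsmul_eq_mul]
  field_simp

end General

lemma subIdx_injective2 (N : ℕ) : Function.Injective2 (subIdx N) := by
  intro a c b d h
  have h' : a.val + (if b then N else 0) = c.val + (if d then N else 0) := congrArg Fin.val h
  have ha := a.isLt
  have hc := c.isLt
  cases b <;> cases d <;> simp at h' <;> first | exact ⟨Fin.ext (by omega), rfl⟩ | omega

lemma bijective_sumElim_subIdx (N : ℕ) (u : Fin N → Bool) :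
    Function.Bijective (Sum.elim (fun j => subIdx N j (u j)) fun j => subIdx N j (!u j)) := by
  refine (Fintype.bijective_iff_injective_and_card _).mpr ⟨?_, by simp [two_mul]⟩
  refine Function.Injective.sumElim (fun j k h => (subIdx_injective2 N h).1)
    (fun j k h => (subIdx_injective2 N h).1) fun j k h => ?_
  obtain ⟨rfl, hu⟩ := subIdx_injective2 N h
  exact Bool.eq_not_self _ |>.mp hu

noncomputable def subIdxEquiv (N : ℕ) (u : Fin N → Bool) : Fin N ⊕ Fin N ≃ Fin (2 * N) :=
  Equiv.ofBijective _ (bijective_sumElim_subIdx N u)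

/-- `heldOut N (s̃, u) i = z̃_{i + (1 - u_i) N}`: the sample paired with `Z_i` that the learner
never sees. -/
def heldOut {𝒵 : Type*} (N : ℕ) (p : (Fin (2 * N) → 𝒵) × (Fin N → Bool)) : Fin N → 𝒵 :=
  dataset N (p.1, fun j => !p.2 j)

section Subsample

variable {𝒵 : Type*} [MeasurableSpace 𝒵] {N : ℕ}

lemma measurable_heldOut : Measurable (heldOut (𝒵 := 𝒵) N) :=
  measurable_dataset.comp <| measurable_fst.prodMk <|
    (Measurable.of_discrete (f := fun (u : Fin N → Bool) j => !u j)).comp measurable_snd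

lemma measurePreserving_dataset_heldOut (PZ : Measure 𝒵) [SigmaFinite PZ] (u : Fin N → Bool) :
    MeasurePreserving (fun s => (dataset N (s, u), heldOut N (s, u)))
      (Measure.pi fun _ => PZ) ((Measure.pi fun _ => PZ).prod (Measure.pi fun _ => PZ)) :=
  (measurePreserving_sumPiEquivProdPi fun _ => PZ).comp
    (measurePreserving_piCongrLeft (fun _ => PZ) (subIdxEquiv N u)).symm

lemma map_dataset_heldOut_apply (PZ : Measure 𝒵) [IsProbabilityMeasure PZ] (i : Fin N) :
    ((Measure.pi fun _ : Fin (2 * N) => PZ).prod (Measure.pi fun _ : Fin N => bern)).map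
      (fun x => (dataset N x, heldOut N x i)) = (Measure.pi fun _ => PZ).prod PZ :=
  Measure.map_prod_eq_of_forall_map_eq
    (measurable_dataset.prodMk ((measurable_pi_apply i).comp measurable_heldOut)) fun u =>
      (((MeasurePreserving.id _).prod (measurePreserving_eval _ i)).comp
        (measurePreserving_dataset_heldOut PZ u)).map_eq

end Subsample

lemma map_hypothesis_heldOut_apply {𝒵 𝒲 Ω : Type*} [MeasurableSpace 𝒵] [MeasurableSpace 𝒲]
    [MeasurableSpace Ω] {μ : Measure Ω} {N : ℕ} {PZ : Measure 𝒵} [IsProbabilityMeasure PZ]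
    {St : Ω → Fin (2 * N) → 𝒵} {U : Ω → Fin N → Bool} {W : Ω → 𝒲}
    (hSt : Measurable St) (hU : Measurable U) (hW : Measurable W)
    (hlaw : μ.map (fun ω => (St ω, U ω)) =
      (Measure.pi fun _ : Fin (2 * N) => PZ).prod (Measure.pi fun _ : Fin N => bern))
    {κ : Kernel (Fin N → 𝒵) 𝒲} [IsMarkovKernel κ]
    (hρ : μ.map (fun ω => ((St ω, U ω), W ω)) =
      (μ.map fun ω => (St ω, U ω)) ⊗ₘ κ.comap (dataset N) measurable_dataset)
    (i : Fin N) :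
    μ.map (fun ω => (W ω, heldOut N (St ω, U ω) i)) = (μ.map W).prod PZ := by
  have hheld : Measurable fun p : (Fin (2 * N) → 𝒵) × (Fin N → Bool) => heldOut N p i :=
    (measurable_pi_apply i).comp measurable_heldOut
  have hjoint : μ.map (fun ω => (W ω, heldOut N (St ω, U ω) i)) =
      (κ ∘ₘ Measure.pi fun _ => PZ).prod PZ := by
    have hT : Measurable fun p : _ × 𝒲 => (p.2, heldOut N p.1 i) :=
      measurable_snd.prodMk (hheld.comp measurable_fst)
    rw [show (fun ω => (W ω, heldOut N (St ω, U ω) i)) =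
        (fun p => (p.2, heldOut N p.1 i)) ∘ fun ω => ((St ω, U ω), W ω) from rfl,
      ← Measure.map_map hT ((hSt.prodMk hU).prodMk hW), hρ, hlaw]
    exact Measure.map_compProd_comap_eq_prod measurable_dataset hheld
      (map_dataset_heldOut_apply PZ i) κ
  have hmarginal : μ.map W = κ ∘ₘ Measure.pi fun _ => PZ := by
    have := congrArg Measure.fst hjoint
    have hheldΩ : Measurable fun ω => heldOut N (St ω, U ω) i := hheld.comp (hSt.prodMk hU)
    rwa [Measure.fst_map_prodMk hheldΩ, Measure.fst_prod] at this
  rw [hjoint, hmarginal]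

theorem stmt9_general
    {𝒵 𝒲 : Type*}
    [MeasurableSpace 𝒵]
    [MeasurableSpace 𝒲]
    {Ω : Type*} [MeasurableSpace Ω] (μ : Measure Ω) [IsProbabilityMeasure μ]
    (N : ℕ) (hN : 0 < N)
    (PZ : Measure 𝒵) [IsProbabilityMeasure PZ]
    (St : Ω → Fin (2 * N) → 𝒵) (U : Ω → Fin N → Bool) (W : Ω → 𝒲)
    (hSt : Measurable St) (hU : Measurable U) (hW : Measurable W)
    -- `S̃` is i.i.d. `P_Z`, `U` is i.i.d. Bernoulli(1/2), and they are independent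
    (hlaw : μ.map (fun ω => (St ω, U ω)) =
      (Measure.pi fun _ : Fin (2 * N) => PZ).prod (Measure.pi fun _ : Fin N => bern))
    -- the hypothesis `W` is produced by a Markov kernel applied to the dataset `S`
    (hkernel : ∃ κ : Kernel (Fin N → 𝒵) 𝒲, IsMarkovKernel κ ∧
      μ.map (fun ω => ((St ω, U ω), W ω)) =
        (μ.map fun ω => (St ω, U ω)) ⊗ₘ κ.comap (dataset N) measurable_dataset)
    (ℓ : 𝒲 → 𝒵 → ℝ)
    -- integrability: `E_{P_W × P_Z}[|ℓ|] < ∞` and `E[|ℓ(W, Z̃_k)|] < ∞` for every `k`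
    (hint : Integrable (fun p : 𝒲 × 𝒵 => ℓ p.1 p.2) ((μ.map W).prod PZ))
    (hint' : ∀ k : Fin (2 * N), Integrable (fun ω => ℓ (W ω) (St ω k)) μ) :
    ∫ ω, ((1 / N : ℝ) * ∑ i,
        (ℓ (W ω) (St ω (subIdx N i (!U ω i))) - ℓ (W ω) (St ω (subIdx N i (U ω i))))) ∂μ =
      ∫ ω, ((∫ z, ℓ (W ω) z ∂PZ) -
        (1 / N : ℝ) * ∑ i, ℓ (W ω) (St ω (subIdx N i (U ω i)))) ∂μ := by
  obtain ⟨κ, hκ, hρ⟩ := hkernel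
  have hjoint := map_hypothesis_heldOut_apply hSt hU hW hlaw hρ
  have hheld : ∀ i, AEMeasurable (fun ω => heldOut N (St ω, U ω) i) μ := fun i =>
    ((measurable_pi_apply i).comp (measurable_heldOut.comp (hSt.prodMk hU))).aemeasurable
  have htrain : ∀ i, Integrable (fun ω => ℓ (W ω) (St ω (subIdx N i (U ω i)))) μ := fun i =>
    integrable_apply_of_measurable_index ((measurable_pi_apply i).comp hU)
      (f := fun c ω => ℓ (W ω) (St ω (subIdx N i c))) fun _ => hint' _
  -- `heldOut N (St ω, U ω) i` unfolds to `St ω (subIdx N i (!U ω i))`.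
  exact integral_mean_sub_eq_integral_sub_mean hN
    (fun i => integrable_comp_of_map_prodMk_eq_prod hW.aemeasurable (hheld i) (hjoint i) hint)
    htrain (integrable_integral_comp hW.aemeasurable hint)
    fun i => integral_comp_of_map_prodMk_eq_prod hW.aemeasurable (hheld i) (hjoint i) hint

/-- in the randomized subsample setting, the expected empirical generalization
error equals the expected generalization error:
`E_{P_{W,S̃,U}}[ĝen(W, S̃, U)] = E_{P_{W,S}}[gen(W, S)]`. -/
theorem stmt9
    {𝒵 𝒲 : Type*}
    [MeasurableSpace 𝒵] [StandardBorelSpace 𝒵] [Nonempty 𝒵]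
    [MeasurableSpace 𝒲] [StandardBorelSpace 𝒲] [Nonempty 𝒲]
    {Ω : Type*} [MeasurableSpace Ω] (μ : Measure Ω) [IsProbabilityMeasure μ]
    (N : ℕ) (hN : 0 < N)
    (PZ : Measure 𝒵) [IsProbabilityMeasure PZ]
    (St : Ω → Fin (2 * N) → 𝒵) (U : Ω → Fin N → Bool) (W : Ω → 𝒲)
    (hSt : Measurable St) (hU : Measurable U) (hW : Measurable W)
    -- `S̃` is i.i.d. `P_Z`, `U` is i.i.d. Bernoulli(1/2), and they are independent
    (hlaw : μ.map (fun ω => (St ω, U ω)) =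
      (Measure.pi fun _ : Fin (2 * N) => PZ).prod (Measure.pi fun _ : Fin N => bern))
    -- the hypothesis `W` is produced by a Markov kernel applied to the dataset `S`
    (hkernel : ∃ κ : Kernel (Fin N → 𝒵) 𝒲, IsMarkovKernel κ ∧
      μ.map (fun ω => ((St ω, U ω), W ω)) =
        (μ.map fun ω => (St ω, U ω)) ⊗ₘ κ.comap (dataset N) measurable_dataset)
    (ℓ : 𝒲 → 𝒵 → ℝ) (hℓ : Measurable fun p : 𝒲 × 𝒵 => ℓ p.1 p.2)
    -- integrability: `E_{P_W × P_Z}[|ℓ|] < ∞` and `E[|ℓ(W, Z̃_k)|] < ∞` for every `k`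
    (hint : Integrable (fun p : 𝒲 × 𝒵 => ℓ p.1 p.2) ((μ.map W).prod PZ))
    (hint' : ∀ k : Fin (2 * N), Integrable (fun ω => ℓ (W ω) (St ω k)) μ) :
    ∫ ω, ((1 / N : ℝ) * ∑ i,
        (ℓ (W ω) (St ω (subIdx N i (!U ω i))) - ℓ (W ω) (St ω (subIdx N i (U ω i))))) ∂μ =
      ∫ ω, ((∫ z, ℓ (W ω) z ∂PZ) -
        (1 / N : ℝ) * ∑ i, ℓ (W ω) (St ω (subIdx N i (U ω i)))) ∂μ :=
  stmt9_general μ N hN PZ St U W hSt hU hW hlaw hkernel ℓ hint hint'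
end

section
/- Let W, Z_1, …, Z_N be jointly distributed random elements of standard Borel spaces such that Z_1, …, Z_N are mutually independent. For each i ∈ {1,…,N}, writing S^{i−1} = (Z_1, …, Z_{i−1}) and S^{−i} = (Z_1, …, Z_{i−1}, Z_{i+1}, …, Z_N), it holds that I(W; Z_i | S^{i−1}) ≤ I(W; Z_i | S^{−i}). -/
open MeasureTheory ProbabilityTheory ENNReal Classical

/-- Kullback--Leibler divergence: `∫ log (dP/dQ) dP` if `P ≪ Q` (and the log-likelihood ratio
is integrable), and `+∞` otherwise. -/
noncomputable def KLdiv {Ω : Type*} [MeasurableSpace Ω] (P Q : Measure Ω) : ℝ≥0∞ :=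
  if P ≪ Q ∧ Integrable (llr P Q) P then ENNReal.ofReal (∫ x, llr P Q x ∂P) else ⊤

/-- Conditional mutual information
`I(A;B|C) = E_{c ∼ P_C}[ KL( P_{A,B|C=c} ‖ P_{A|C=c} × P_{B|C=c} ) ]`,
defined via regular conditional distributions.  (When `C` is a degenerate random variable this
reduces to the mutual information `I(A;B)`.) -/
noncomputable def condMI {Ω α β γ : Type*} [MeasurableSpace Ω]
    [MeasurableSpace α] [StandardBorelSpace α] [Nonempty α]
    [MeasurableSpace β] [StandardBorelSpace β] [Nonempty β]
    [MeasurableSpace γ]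
    (μ : Measure Ω) [IsFiniteMeasure μ] (A : Ω → α) (B : Ω → β) (C : Ω → γ) : ℝ≥0∞ :=
  ∫⁻ c, KLdiv (condDistrib (fun ω => (A ω, B ω)) C μ c)
      ((condDistrib A C μ c).prod (condDistrib B C μ c)) ∂(μ.map C)

/-!
If `B` is independent of `C`, conditioning on `C` does not change the law of `B`, so by the chain
rule for the Kullback–Leibler divergence `I(A; B | C)` is the divergence between the joint law of
`(C, A, B)` and the product of the laws of `(C, A)` and `B`, i.e. the mutual information
`I((C, A); B)`. Here `B = Z_i` is independent of `S^{-i}`, and `S^{i-1}` is a function of `S^{-i}`;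
the data processing inequality for the map `(S^{-i}, W, Z_i) ↦ (S^{i-1}, W, Z_i)` then gives the
claim.
-/

open InformationTheory

lemma KLdiv_eq_klDiv {α : Type*} [MeasurableSpace α] {P Q : Measure α}
    (h : P Set.univ = Q Set.univ) : KLdiv P Q = klDiv P Q := by
  by_cases hPQ : P ≪ Q ∧ Integrable (llr P Q) P
  · rw [KLdiv, if_pos hPQ, klDiv_of_ac_of_integrable hPQ.1 hPQ.2, measureReal_def,
      measureReal_def, h, add_sub_cancel_right]
  · rw [KLdiv, if_neg hPQ, eq_comm, klDiv_eq_top_iff]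
    exact fun hac hint => hPQ ⟨hac, hint⟩

section ChainRule

variable {α β : Type*} [MeasurableSpace α] [MeasurableSpace β]
  [MeasurableSpace.CountableOrCountablyGenerated α β]
  {μ : Measure α} [IsFiniteMeasure μ] {κ η : Kernel α β} [IsFiniteKernel κ] [IsFiniteKernel η]

lemma ProbabilityTheory.rnDeriv_measure_compProd_right (hκη : ∀ᵐ a ∂μ, κ a ≪ η a) :
    (μ ⊗ₘ κ).rnDeriv (μ ⊗ₘ η) =ᵐ[μ ⊗ₘ η] fun p => κ.rnDeriv η p.1 p.2 := by
  have hκ : μ ⊗ₘ κ = (μ ⊗ₘ η).withDensity fun p => κ.rnDeriv η p.1 p.2 := by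
    rw [← Measure.compProd_withDensity (Kernel.measurable_rnDeriv κ η)]
    refine Measure.compProd_congr ?_
    filter_upwards [hκη] with a ha using (Kernel.withDensity_rnDeriv_eq ha).symm
  rw [hκ]
  exact Measure.rnDeriv_withDensity _ (Kernel.measurable_rnDeriv κ η)

lemma InformationTheory.klDiv_compProd_right :
    klDiv (μ ⊗ₘ κ) (μ ⊗ₘ η) = ∫⁻ a, klDiv (κ a) (η a) ∂μ := by
  by_cases hκη : ∀ᵐ a ∂μ, κ a ≪ η a
  · rw [klDiv_eq_lintegral_klFun_of_ac (Measure.AbsolutelyContinuous.compProd_right hκη)]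
    calc ∫⁻ p, ENNReal.ofReal (klFun ((μ ⊗ₘ κ).rnDeriv (μ ⊗ₘ η) p).toReal) ∂(μ ⊗ₘ η)
        = ∫⁻ p, ENNReal.ofReal (klFun (κ.rnDeriv η p.1 p.2).toReal) ∂(μ ⊗ₘ η) := by
          refine lintegral_congr_ae ?_
          filter_upwards [rnDeriv_measure_compProd_right hκη] with p hp
          rw [hp]
      _ = ∫⁻ a, ∫⁻ b, ENNReal.ofReal (klFun (κ.rnDeriv η a b).toReal) ∂(η a) ∂μ :=
          Measure.lintegral_compProd (by fun_prop)
      _ = ∫⁻ a, klDiv (κ a) (η a) ∂μ := by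
          refine lintegral_congr_ae ?_
          filter_upwards [hκη] with a ha
          rw [klDiv_eq_lintegral_klFun_of_ac ha]
          refine lintegral_congr_ae ?_
          filter_upwards [Kernel.rnDeriv_eq_rnDeriv_measure (κ := κ) (η := η) (a := a)] with b hb
          rw [hb]
  · have hac : ¬ μ ⊗ₘ κ ≪ μ ⊗ₘ η := fun h => hκη h.kernel_of_compProd
    have hs : MeasurableSet {a | ¬ κ a ≪ η a} :=
      (Kernel.measurableSet_absolutelyContinuous κ η).compl
    rw [klDiv_of_not_ac hac, eq_comm, eq_top_iff]
    calc ∞ = ∫⁻ a, {a | ¬ κ a ≪ η a}.indicator (fun _ => ∞) a ∂μ := by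
          rw [lintegral_indicator_const hs, top_mul (ae_iff.not.mp hκη)]
      _ ≤ ∫⁻ a, klDiv (κ a) (η a) ∂μ :=
          lintegral_mono (Set.indicator_le fun a ha => (klDiv_of_not_ac ha).symm.le)

end ChainRule

lemma condDistrib_ae_eq_const_of_indepFun {Ω β γ : Type*} [MeasurableSpace Ω]
    [MeasurableSpace β] [StandardBorelSpace β] [Nonempty β] [MeasurableSpace γ]
    {μ : Measure Ω} [IsFiniteMeasure μ] {B : Ω → β} {C : Ω → γ}
    (hB : Measurable B) (hC : Measurable C) (hCB : IndepFun C B μ) :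
    condDistrib B C μ =ᵐ[μ.map C] Kernel.const γ (μ.map B) := by
  refine condDistrib_ae_eq_of_measure_eq_compProd C hB.aemeasurable ?_
  rw [Measure.compProd_const]
  exact (indepFun_iff_map_prod_eq_prod_map_map hC.aemeasurable hB.aemeasurable).mp hCB

lemma MeasureTheory.Measure.compProd_prod_const {α β γ : Type*} [MeasurableSpace α]
    [MeasurableSpace β] [MeasurableSpace γ] (μ : Measure α) [SFinite μ] (κ : Kernel α β)
    [IsSFiniteKernel κ] (ν : Measure γ) [SFinite ν] :
    μ ⊗ₘ (κ ×ₖ Kernel.const α ν) = ((μ ⊗ₘ κ).prod ν).map MeasurableEquiv.prodAssoc := by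
  ext s hs
  rw [Measure.compProd_apply hs, Measure.map_apply (by fun_prop) hs,
    Measure.prod_apply (hs.preimage (by fun_prop)), Measure.lintegral_compProd
      (measurable_measure_prodMk_left (hs.preimage (by fun_prop)))]
  refine lintegral_congr fun a => ?_
  rw [Kernel.prod_apply, Kernel.const_apply, Measure.prod_apply (measurable_prodMk_left hs)]
  rfl

section ConditionalMutualInformation

variable {Ω α β γ : Type*} [MeasurableSpace Ω] [MeasurableSpace α] [StandardBorelSpace α]
  [Nonempty α] [MeasurableSpace β] [StandardBorelSpace β] [Nonempty β] [MeasurableSpace γ]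
  {μ : Measure Ω} [IsProbabilityMeasure μ] {A : Ω → α} {B : Ω → β} {C : Ω → γ}

lemma condMI_eq_klDiv_of_indepFun (hA : Measurable A) (hB : Measurable B) (hC : Measurable C)
    (hCB : IndepFun C B μ) :
    condMI μ A B C = klDiv (μ.map fun ω => (C ω, A ω, B ω))
      (((μ.map fun ω => (C ω, A ω)).prod (μ.map B)).map MeasurableEquiv.prodAssoc) := by
  have : IsProbabilityMeasure (μ.map B) := Measure.isProbabilityMeasure_map hB.aemeasurable
  rw [← compProd_map_condDistrib (hA.prodMk hB).aemeasurable,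
    ← compProd_map_condDistrib hA.aemeasurable, ← Measure.compProd_prod_const,
    klDiv_compProd_right, condMI]
  refine lintegral_congr_ae ?_
  filter_upwards [condDistrib_ae_eq_const_of_indepFun hB hC hCB] with c hc
  rw [hc, Kernel.prod_apply, Kernel.const_apply, KLdiv_eq_klDiv (by simp)]

lemma condMI_comp_le_of_indepFun {δ : Type*} [MeasurableSpace δ] {f : γ → δ} (hf : Measurable f)
    (hA : Measurable A) (hB : Measurable B) (hC : Measurable C) (hCB : IndepFun C B μ) :
    condMI μ A B (f ∘ C) ≤ condMI μ A B C := by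
  rw [condMI_eq_klDiv_of_indepFun hA hB (hf.comp hC) (hCB.comp hf measurable_id),
    condMI_eq_klDiv_of_indepFun hA hB hC hCB]
  have hT : Measurable (Prod.map f (id : α × β → α × β)) := by fun_prop
  have hjoint : (μ.map fun ω => (C ω, A ω, B ω)).map (Prod.map f id)
      = μ.map fun ω => ((f ∘ C) ω, A ω, B ω) := by
    rw [Measure.map_map hT (by fun_prop)]
    rfl
  have href : (((μ.map fun ω => (C ω, A ω)).prod (μ.map B)).map MeasurableEquiv.prodAssoc).map
        (Prod.map f id)
      = ((μ.map fun ω => ((f ∘ C) ω, A ω)).prod (μ.map B)).map MeasurableEquiv.prodAssoc := by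
    calc _ = (((μ.map fun ω => (C ω, A ω)).prod (μ.map B)).map
            (Prod.map (Prod.map f id) id)).map MeasurableEquiv.prodAssoc := by
          rw [Measure.map_map hT (by fun_prop), Measure.map_map (by fun_prop) (by fun_prop)]
          rfl
      _ = _ := by
          rw [← Measure.map_prod_map _ _ (by fun_prop) measurable_id, Measure.map_id,
            Measure.map_map (by fun_prop) (hC.prodMk hA)]
          rfl
  rw [← hjoint, ← href]
  exact klDiv_map_le _ _ hT

end ConditionalMutualInformation

lemma ProbabilityTheory.iIndepFun.indepFun_subtype_ne {Ω ι : Type*} [MeasurableSpace Ω]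
    {μ : Measure Ω} [Fintype ι] {β : ι → Type*} [∀ i, MeasurableSpace (β i)]
    {f : ∀ i, Ω → β i} (hf : iIndepFun f μ) (hf_meas : ∀ i, Measurable (f i)) (i : ι) :
    IndepFun (fun ω (k : {k // k ≠ i}) => f k ω) (f i) μ := by
  have hφ : Measurable fun (g : ∀ k : ({i}ᶜ : Finset ι), β k) (k : {k // k ≠ i}) =>
      g ⟨k.1, by simpa using k.2⟩ := by fun_prop
  have hψ : Measurable fun (g : ∀ k : ({i} : Finset ι), β k) =>
      g ⟨i, Finset.mem_singleton_self i⟩ := measurable_pi_apply _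
  exact (hf.indepFun_finset {i}ᶜ {i} disjoint_compl_left hf_meas).comp hφ hψ

/-- if `Z_1, …, Z_N` are mutually independent, then for each `i`,
`I(W; Z_i | S^{i−1}) ≤ I(W; Z_i | S^{−i})`, where `S^{i−1} = (Z_1, …, Z_{i−1})` and
`S^{−i}` is the tuple of all samples except `Z_i`. -/
theorem stmt10
    {𝒵 𝒲 : Type*}
    [MeasurableSpace 𝒵] [StandardBorelSpace 𝒵] [Nonempty 𝒵]
    [MeasurableSpace 𝒲] [StandardBorelSpace 𝒲] [Nonempty 𝒲]
    {Ω : Type*} [MeasurableSpace Ω] (μ : Measure Ω) [IsProbabilityMeasure μ]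
    (N : ℕ) (W : Ω → 𝒲) (Z : Fin N → Ω → 𝒵)
    (hW : Measurable W) (hZ : ∀ i, Measurable (Z i))
    (hindep : iIndepFun (m := fun _ : Fin N => ‹MeasurableSpace 𝒵›) Z μ)
    (i : Fin N) :
    condMI μ W (Z i) (fun ω => fun k : Fin i.val => Z (Fin.castLE i.isLt.le k) ω) ≤
      condMI μ W (Z i) (fun ω => fun k : {k : Fin N // k ≠ i} => Z k ω) := by
  let restrict (s : {k : Fin N // k ≠ i} → 𝒵) (k : Fin i.val) : 𝒵 :=
    s ⟨Fin.castLE i.isLt.le k, Fin.ne_of_lt k.isLt⟩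
  exact condMI_comp_le_of_indepFun (f := restrict) (by fun_prop) hW (hZ i) (by fun_prop)
    (hindep.indepFun_subtype_ne hZ i)
end
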